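/- arXiv:2402.18231 — 3 statements merged into one kernel-verified Lean document; each statement's English description precedes it below -/
import Mathlib

section
/- For any positive definite Hermitian matrix E ∈ ℂ^{m×m}, the maximum of f(W) = log det(W) − trace(W E) + m over Hermitian positive definite W ∈ ℂ^{m×m} is attained at W* = E^{-1}, and the maximum value equals −log det(E) = log det(E^{-1}). -/
open Matrix ComplexOrder

private lemma trace_eq_sum_eigenvalues' {m : ℕ} {A : Matrix (Fin m) (Fin m) ℂ}
    (hA : A.IsHermitian) : A.trace = ∑ i, (hA.eigenvalues i : ℂ) := by
  exact hA.trace_eq_sum_eigenvalues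

private lemma logdet_le_trace {m : ℕ} {A : Matrix (Fin m) (Fin m) ℂ} (hA : A.PosDef) :
    Real.log A.det.re ≤ A.trace.re - m := by
  have hdet : A.det.re = ∏ i, hA.1.eigenvalues i := by
    rw [hA.1.det_eq_prod_eigenvalues]
    norm_cast
  have htr : A.trace.re = ∑ i, hA.1.eigenvalues i := by
    rw [trace_eq_sum_eigenvalues' hA.1]
    norm_cast
  rw [hdet, htr, Real.log_prod (fun i _ => (hA.eigenvalues_pos i).ne')]
  have h : ∀ i ∈ Finset.univ, Real.log (hA.1.eigenvalues i) ≤ hA.1.eigenvalues i - 1 :=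
    fun i _ => Real.log_le_sub_one_of_pos (hA.eigenvalues_pos i)
  calc ∑ i, Real.log (hA.1.eigenvalues i) ≤ ∑ i, (hA.1.eigenvalues i - 1) :=
        Finset.sum_le_sum h
    _ = (∑ i, hA.1.eigenvalues i) - m := by
        rw [Finset.sum_sub_distrib]
        simp

private lemma posDef_conj {m : ℕ} {A B : Matrix (Fin m) (Fin m) ℂ} (hA : A.PosDef)
    (hB : IsUnit B.det) : (Bᴴ * A * B).PosDef := by
  refine PosDef.of_dotProduct_mulVec_pos (Matrix.isHermitian_conjTranspose_mul_mul B hA.1) fun x hx => ?_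
  have hBx : B *ᵥ x ≠ 0 := by
    intro h
    apply hx
    have := congrArg (fun v => B⁻¹ *ᵥ v) h
    simpa [Matrix.mulVec_mulVec, Matrix.nonsing_inv_mul B hB] using this
  have key : dotProduct (star x) ((Bᴴ * A * B) *ᵥ x)
      = dotProduct (star (B *ᵥ x)) (A *ᵥ (B *ᵥ x)) := by
    rw [← Matrix.mulVec_mulVec, ← Matrix.mulVec_mulVec, Matrix.star_mulVec,
      Matrix.dotProduct_mulVec]
  rw [key]
  exact hA.dotProduct_mulVec_pos hBx

private lemma det_re_pos {m : ℕ} {A : Matrix (Fin m) (Fin m) ℂ} (hA : A.PosDef) :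
    0 < A.det.re ∧ A.det.im = 0 := by
  have := hA.det_pos
  rw [Complex.lt_def] at this
  exact ⟨by simpa using this.1, by simpa using this.2.symm⟩

open scoped MatrixOrder in
private lemma exists_herm_sqrt {m : ℕ} {E : Matrix (Fin m) (Fin m) ℂ} (hE : E.PosDef) :
    ∃ S : Matrix (Fin m) (Fin m) ℂ, S.IsHermitian ∧ S * S = E :=
  ⟨CFC.sqrt E, (CFC.sqrt_nonneg E).posSemidef.isHermitian,
    CFC.sqrt_mul_sqrt_self E hE.posSemidef.nonneg⟩

theorem logdet_trace_max (m : ℕ)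
    (E : Matrix (Fin m) (Fin m) ℂ) (hE : E.PosDef) :
    (∀ W : Matrix (Fin m) (Fin m) ℂ, W.PosDef →
      Real.log W.det.re - (Matrix.trace (W * E)).re + m ≤
        Real.log (E⁻¹).det.re - (Matrix.trace (E⁻¹ * E)).re + m) ∧
    (E⁻¹).PosDef ∧
    Real.log (E⁻¹).det.re - (Matrix.trace (E⁻¹ * E)).re + m =
      Real.log (E⁻¹).det.re ∧
    Real.log (E⁻¹).det.re = - Real.log E.det.re := by
  obtain ⟨hEre, hEim⟩ := det_re_pos hE
  have hEdet : IsUnit E.det := isUnit_iff_ne_zero.mpr (by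
    intro h; rw [h] at hEre; simp at hEre)
  have hinv : E⁻¹ * E = 1 := Matrix.nonsing_inv_mul E hEdet
  have htr1 : (Matrix.trace (E⁻¹ * E)).re = (m : ℝ) := by
    rw [hinv, Matrix.trace_one]
    simp
  have hEdetre : E.det = (E.det.re : ℂ) := Complex.ext rfl (by simpa using hEim)
  have hinvdet : (E⁻¹).det.re = (E.det.re)⁻¹ := by
    rw [Matrix.det_nonsing_inv, Ring.inverse_eq_inv', hEdetre, ← Complex.ofReal_inv]
    simp
  have hloginv : Real.log (E⁻¹).det.re = - Real.log E.det.re := by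
    rw [hinvdet, Real.log_inv]
  refine ⟨?_, hE.inv, by rw [htr1]; ring, hloginv⟩
  intro W hW
  obtain ⟨hWre, hWim⟩ := det_re_pos hW
  obtain ⟨S, hS, hSS⟩ := exists_herm_sqrt hE
  have hSdetmul : S.det * S.det = E.det := by rw [← Matrix.det_mul, hSS]
  have hSdet : IsUnit S.det := isUnit_iff_ne_zero.mpr (by
    intro h
    rw [h, mul_zero] at hSdetmul
    exact hEdet.ne_zero hSdetmul.symm)
  have hM : (Sᴴ * W * S).PosDef := posDef_conj hW hSdet
  rw [hS.eq] at hM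
  have htrM : (S * W * S).trace = (W * E).trace := by
    rw [Matrix.trace_mul_cycle, hSS, Matrix.trace_mul_comm]
  have hdetM : (S * W * S).det = W.det * E.det := by
    rw [Matrix.det_mul, Matrix.det_mul, ← hSdetmul]; ring
  have hdetMre : (S * W * S).det.re = W.det.re * E.det.re := by
    rw [hdetM, Complex.mul_re, hWim, hEim]
    ring
  have key := logdet_le_trace hM
  rw [hdetMre, htrM] at key
  rw [Real.log_mul hWre.ne' hEre.ne'] at key
  rw [htr1, hloginv]
  linarith
end

section
/- WMMSE transformation: For A ∈ ℂ^{n×p}, B ∈ ℂ^{p×m}, and Hermitian positive definite N ∈ ℂ^{n×n}, one has log det(I + A B B^H A^H N^{-1}) = max over U ∈ ℂ^{n×m} and Hermitian W ≻ 0 of [log det(W) − trace(W E(U,B)) + m], where E(U,B) = (I − U^H A B)(I − U^H A B)^H + U^H N U. The optima are U* = (N + A B B^H A^H)^{-1} A B and W* = (I − (U*)^H A B)^{-1}. -/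
open Matrix ComplexOrder

private lemma aux_posDef_conj {k : ℕ} {W : Matrix (Fin k) (Fin k) ℂ} (hW : W.PosDef)
    (P : Matrix (Fin k) (Fin k) ℂ) (hP : IsUnit P) : (Pᴴ * W * P).PosDef := by
  refine posDef_iff_dotProduct_mulVec.mpr ⟨isHermitian_conjTranspose_mul_mul P hW.1, fun x hx => ?_⟩
  have hPx : P *ᵥ x ≠ 0 := by
    intro hc
    exact hx ((Matrix.mulVec_injective_iff_isUnit.mpr hP) (by simpa using hc))
  simpa only [star_mulVec, dotProduct_mulVec, vecMul_vecMul] using (posDef_iff_dotProduct_mulVec.mp hW).2 hPx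

private lemma aux_trace_eq {k : ℕ} {X : Matrix (Fin k) (Fin k) ℂ} (hX : X.IsHermitian) :
    X.trace = ∑ i, (hX.eigenvalues i : ℂ) := by
  conv_lhs => rw [hX.spectral_theorem]
  rw [Unitary.conjStarAlgAut_apply, Matrix.trace_mul_cycle, Unitary.coe_star_mul_self, one_mul, trace_diagonal]
  simp

private lemma aux_trace_re_nonneg {k : ℕ} {X : Matrix (Fin k) (Fin k) ℂ} (hX : X.PosSemidef) :
    0 ≤ X.trace.re := by
  rw [aux_trace_eq hX.1, ← Complex.ofReal_sum, Complex.ofReal_re]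
  exact Finset.sum_nonneg fun i _ => hX.eigenvalues_nonneg i

open scoped MatrixOrder in
private lemma aux_trace_mul_nonneg {k : ℕ} {W D : Matrix (Fin k) (Fin k) ℂ}
    (hW : W.PosSemidef) (hD : D.PosSemidef) : 0 ≤ (Matrix.trace (W * D)).re := by
  obtain ⟨Y, hY⟩ := CStarAlgebra.nonneg_iff_eq_star_mul_self.mp hW.nonneg
  have h : Matrix.trace (W * D) = Matrix.trace (Y * D * Yᴴ) := by
    rw [hY, star_eq_conjTranspose, ← Matrix.trace_mul_cycle]
  rw [h]
  exact aux_trace_re_nonneg (hD.mul_mul_conjTranspose_same Y)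

private lemma aux_det_re_eq {k : ℕ} {X : Matrix (Fin k) (Fin k) ℂ} (hX : X.PosDef) :
    X.det = (X.det.re : ℂ) ∧ 0 < X.det.re := by
  have h := hX.det_pos
  rw [Complex.lt_def] at h
  obtain ⟨h1, h2⟩ := h
  simp only [Complex.zero_re, Complex.zero_im] at h1 h2
  exact ⟨Complex.ext rfl (by simp [← h2]), h1⟩

private lemma aux_logdet_le {k : ℕ} {X : Matrix (Fin k) (Fin k) ℂ} (hX : X.PosDef) :
    Real.log X.det.re ≤ X.trace.re - k := by
  have hdet : X.det.re = ∏ i, hX.1.eigenvalues i := by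
    rw [hX.1.det_eq_prod_eigenvalues]; norm_cast
  have htr : X.trace.re = ∑ i, hX.1.eigenvalues i := by
    rw [aux_trace_eq hX.1, ← Complex.ofReal_sum, Complex.ofReal_re]
  rw [hdet, htr, Real.log_prod (fun i _ => (hX.eigenvalues_pos i).ne')]
  calc ∑ i, Real.log (hX.1.eigenvalues i)
      ≤ ∑ i, (hX.1.eigenvalues i - 1) :=
        Finset.sum_le_sum fun i _ => Real.log_le_sub_one_of_pos (hX.eigenvalues_pos i)
    _ = (∑ i, hX.1.eigenvalues i) - k := by
        rw [Finset.sum_sub_distrib]; simp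

open scoped MatrixOrder in
private lemma aux_sqrt {k : ℕ} {X : Matrix (Fin k) (Fin k) ℂ} (hX : X.PosSemidef) :
    ∃ Q : Matrix (Fin k) (Fin k) ℂ, Qᴴ = Q ∧ Q * Q = X :=
  ⟨CFC.sqrt X, (CFC.sqrt_nonneg X).isSelfAdjoint.star_eq, CFC.sqrt_mul_sqrt_self X hX.nonneg⟩

theorem wmmse_transformation (n p m : ℕ)
    (A : Matrix (Fin n) (Fin p) ℂ) (B : Matrix (Fin p) (Fin m) ℂ)
    (N : Matrix (Fin n) (Fin n) ℂ) (hN : N.PosDef)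
    (E : Matrix (Fin n) (Fin m) ℂ → Matrix (Fin m) (Fin m) ℂ)
    (hE : ∀ U, E U = ((1 : Matrix (Fin m) (Fin m) ℂ) - Uᴴ * (A * B)) *
        ((1 : Matrix (Fin m) (Fin m) ℂ) - Uᴴ * (A * B))ᴴ + Uᴴ * N * U)
    (f : Matrix (Fin n) (Fin m) ℂ → Matrix (Fin m) (Fin m) ℂ → ℝ)
    (hf : ∀ U W, f U W = Real.log W.det.re - (Matrix.trace (W * E U)).re + m)
    (Uopt : Matrix (Fin n) (Fin m) ℂ)
    (hUopt : Uopt = (N + A * B * Bᴴ * Aᴴ)⁻¹ * (A * B))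
    (Wopt : Matrix (Fin m) (Fin m) ℂ)
    (hWopt : Wopt = ((1 : Matrix (Fin m) (Fin m) ℂ) - Uoptᴴ * (A * B))⁻¹) :
    Wopt.PosDef ∧
    f Uopt Wopt =
      Real.log (((1 : Matrix (Fin n) (Fin n) ℂ) + A * B * Bᴴ * Aᴴ * N⁻¹).det.re) ∧
    (∀ (U : Matrix (Fin n) (Fin m) ℂ) (W : Matrix (Fin m) (Fin m) ℂ), W.PosDef →
      f U W ≤
        Real.log (((1 : Matrix (Fin n) (Fin n) ℂ) + A * B * Bᴴ * Aᴴ * N⁻¹).det.re)) := by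
  -- basic notation
  set M : Matrix (Fin n) (Fin m) ℂ := A * B with hMdef
  have hMM : A * B * Bᴴ * Aᴴ = M * Mᴴ := by
    simp [hMdef, conjTranspose_mul, Matrix.mul_assoc]
  set S : Matrix (Fin n) (Fin n) ℂ := N + M * Mᴴ with hSdef
  have hS : S.PosDef := hN.add_posSemidef (posSemidef_self_mul_conjTranspose M)
  have hSdu : IsUnit S.det := (Matrix.isUnit_iff_isUnit_det S).mp hS.isUnit
  have hNdu : IsUnit N.det := (Matrix.isUnit_iff_isUnit_det N).mp hN.isUnit
  have hSS : S * S⁻¹ = 1 := Matrix.mul_nonsing_inv S hSdu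
  have hSS' : S⁻¹ * S = 1 := Matrix.nonsing_inv_mul S hSdu
  have hNN' : N⁻¹ * N = 1 := Matrix.nonsing_inv_mul N hNdu
  have hUopt2 : Uopt = S⁻¹ * M := by rw [hUopt, hMM]
  have hSUopt : S * Uopt = M := by
    rw [hUopt2, ← Matrix.mul_assoc, hSS, Matrix.one_mul]
  have hUoptH : Uoptᴴ = Mᴴ * S⁻¹ := by
    rw [hUopt2, conjTranspose_mul, Matrix.conjTranspose_nonsing_inv, hS.isHermitian.eq]
  have hUoptHS : Uoptᴴ * S = Mᴴ := by
    rw [hUoptH, Matrix.mul_assoc, hSS', Matrix.mul_one]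
  have hUM : Uoptᴴ * M = Mᴴ * Uopt := by
    rw [hUoptH, Matrix.mul_assoc, ← hUopt2]
  set Em : Matrix (Fin m) (Fin m) ℂ := 1 - Mᴴ * Uopt with hEmdef
  set C : Matrix (Fin m) (Fin m) ℂ := Mᴴ * N⁻¹ * M with hCdef
  have hCpsd : C.PosSemidef := (hN.inv.posSemidef).conjTranspose_mul_mul_same M
  have h1C : ((1 : Matrix (Fin m) (Fin m) ℂ) + C).PosDef :=
    Matrix.PosDef.add_posSemidef Matrix.PosDef.one hCpsd
  -- the inverse identity
  have hMMS : M * Mᴴ = S - N := by rw [hSdef]; abel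
  have hEmInv : ((1 : Matrix (Fin m) (Fin m) ℂ) + C) * Em = 1 := by
    have key : C * (Mᴴ * Uopt) = C - Mᴴ * Uopt := by
      calc C * (Mᴴ * Uopt) = Mᴴ * (N⁻¹ * ((M * Mᴴ) * Uopt)) := by
            rw [hCdef]; simp only [Matrix.mul_assoc]
        _ = Mᴴ * (N⁻¹ * ((S - N) * Uopt)) := by rw [hMMS]
        _ = Mᴴ * (N⁻¹ * (M - N * Uopt)) := by rw [Matrix.sub_mul, hSUopt]
        _ = Mᴴ * (N⁻¹ * M - Uopt) := by
            have hNNU : N⁻¹ * (N * Uopt) = Uopt := by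
              rw [← Matrix.mul_assoc, hNN', Matrix.one_mul]
            congr 1
            rw [Matrix.mul_sub, hNNU]
        _ = C - Mᴴ * Uopt := by rw [Matrix.mul_sub, hCdef, Matrix.mul_assoc]
    have hCE : C * Em = Mᴴ * Uopt := by
      rw [hEmdef, Matrix.mul_sub, Matrix.mul_one, key, sub_sub_cancel]
    rw [Matrix.add_mul, Matrix.one_mul, hCE, hEmdef, sub_add_cancel]
  have hEmEq : Em = ((1 : Matrix (Fin m) (Fin m) ℂ) + C)⁻¹ :=
    (Matrix.inv_eq_right_inv hEmInv).symm
  have hEmPD : Em.PosDef := hEmEq ▸ h1C.inv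
  have hWoptEq : Wopt = 1 + C := by
    rw [hWopt, hUM, ← hEmdef, hEmEq, Matrix.nonsing_inv_nonsing_inv _
      ((Matrix.isUnit_iff_isUnit_det _).mp h1C.isUnit)]
  -- completing the square
  have hsq : ∀ U : Matrix (Fin n) (Fin m) ℂ,
      E U = (U - Uopt)ᴴ * S * (U - Uopt) + Em := by
    intro U
    have hct : ((1 : Matrix (Fin m) (Fin m) ℂ) - Uᴴ * M)ᴴ = 1 - Mᴴ * U := by
      simp [conjTranspose_sub, conjTranspose_mul]
    have e1 : (U - Uopt)ᴴ * S * (U - Uopt)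
        = Uᴴ * (S * U) - Uᴴ * M - Mᴴ * U + Mᴴ * Uopt := by
      rw [conjTranspose_sub]
      calc (Uᴴ - Uoptᴴ) * S * (U - Uopt)
          = Uᴴ * (S * U) - Uᴴ * (S * Uopt) - (Uoptᴴ * S) * U + (Uoptᴴ * S) * Uopt := by
            simp only [Matrix.sub_mul, Matrix.mul_sub, Matrix.mul_assoc]; abel
        _ = Uᴴ * (S * U) - Uᴴ * M - Mᴴ * U + Mᴴ * Uopt := by rw [hSUopt, hUoptHS]
    have e2 : S * U = N * U + M * (Mᴴ * U) := by
      rw [hSdef, Matrix.add_mul, Matrix.mul_assoc]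
    rw [hE, hct, e1, e2, hEmdef]
    simp only [Matrix.mul_sub, Matrix.sub_mul, Matrix.mul_add, Matrix.add_mul,
      Matrix.mul_one, Matrix.one_mul, Matrix.mul_assoc]
    abel
  -- determinant identification
  have hdet_eq : ((1 : Matrix (Fin n) (Fin n) ℂ) + A * B * Bᴴ * Aᴴ * N⁻¹).det
      = ((1 : Matrix (Fin m) (Fin m) ℂ) + C).det := by
    have h1 : (1 : Matrix (Fin n) (Fin n) ℂ) + A * B * Bᴴ * Aᴴ * N⁻¹
        = 1 + M * (Mᴴ * N⁻¹) := by rw [hMM, Matrix.mul_assoc]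
    rw [h1, Matrix.det_one_add_mul_comm, hCdef, Matrix.mul_assoc]
  refine ⟨hWoptEq ▸ h1C, ?_, ?_⟩
  · -- value at the optimum
    have hEopt : E Uopt = Em := by
      rw [hsq Uopt, sub_self]
      simp
    have htr1 : Wopt * E Uopt = 1 := by rw [hEopt, hWoptEq, hEmInv]
    rw [hf, htr1, hdet_eq, hWoptEq]
    simp [Matrix.trace_one]
  · -- the inequality
    intro U W hW
    rw [hf, hdet_eq]
    set d : ℝ := ((1 : Matrix (Fin m) (Fin m) ℂ) + C).det.re with hd
    have hd_pos : 0 < d := (aux_det_re_eq h1C).2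
    have hEmdet : Em.det = ((d⁻¹ : ℝ) : ℂ) := by
      rw [hEmEq, Matrix.det_nonsing_inv, Ring.inverse_eq_inv, (aux_det_re_eq h1C).1]
      push_cast
      ring
    -- square root of Em
    obtain ⟨Q, hQH0, hQQ0⟩ := aux_sqrt hEmPD.posSemidef
    have hQH : Qᴴ = Q := hQH0
    have hQQ : Q * Q = Em := hQQ0
    have hQdet : IsUnit Q := by
      rw [Matrix.isUnit_iff_isUnit_det, isUnit_iff_ne_zero]
      intro hc
      have : Em.det = 0 := by rw [← hQQ, Matrix.det_mul, hc, mul_zero]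
      rw [hEmdet] at this
      exact absurd (by exact_mod_cast this) (by positivity : (d : ℝ)⁻¹ ≠ 0)
    have hXPD : (Q * W * Q).PosDef := by
      have := aux_posDef_conj hW Q hQdet
      rwa [hQH] at this
    have hXtr : (Q * W * Q).trace = (W * Em).trace := by
      rw [Matrix.trace_mul_cycle, hQQ, Matrix.trace_mul_comm]
    have hXdet : (Q * W * Q).det.re = d⁻¹ * W.det.re := by
      have h1 : (Q * W * Q).det = Em.det * W.det := by
        rw [Matrix.det_mul, Matrix.det_mul, ← hQQ, Matrix.det_mul]
        ring
      rw [h1, hEmdet, (aux_det_re_eq hW).1]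
      push_cast
      simp
    have hkey := aux_logdet_le hXPD
    rw [hXdet, hXtr] at hkey
    have hlog : Real.log (d⁻¹ * W.det.re) = -Real.log d + Real.log W.det.re := by
      rw [Real.log_mul (by positivity) (aux_det_re_eq hW).2.ne', Real.log_inv]
    rw [hlog] at hkey
    -- positivity of the cross term
    have hD : ((U - Uopt)ᴴ * S * (U - Uopt)).PosSemidef :=
      hS.posSemidef.conjTranspose_mul_mul_same (U - Uopt)
    have htr_split : (Matrix.trace (W * E U)).re
        = (Matrix.trace (W * ((U - Uopt)ᴴ * S * (U - Uopt)))).re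
          + (Matrix.trace (W * Em)).re := by
      rw [hsq U, Matrix.mul_add, Matrix.trace_add, Complex.add_re]
    have hcross : 0 ≤ (Matrix.trace (W * ((U - Uopt)ᴴ * S * (U - Uopt)))).re :=
      aux_trace_mul_nonneg hW.posSemidef hD
    rw [htr_split]
    linarith
end

section
/- With U* = (N + A B B^H A^H)^{-1} A B and E* = E(U*, B) = (I − (U*)^H A B)(I − (U*)^H A B)^H + (U*)^H N U*, the matrix I − (U*)^H A B equals E*, and hence E* = (I + B^H A^H N^{-1} A B)^{-1} is Hermitian positive definite with log det((E*)^{-1}) = log det(I + A B B^H A^H N^{-1}). -/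
/-!
Write `C = A B`, `S = N + C Cᴴ` and `M = Cᴴ S⁻¹ C = U*ᴴ C`. Since `N = S - C Cᴴ`, the noise term is
`U*ᴴ N U* = M - M²`, and `M` is Hermitian, so `E* = (1 - M)² + M - M² = 1 - M`. Expanding
`N⁻¹ = S⁻¹ (S N⁻¹) = S⁻¹ (1 + C Cᴴ N⁻¹)` gives `X = M + M X` for `X = Cᴴ N⁻¹ C`, i.e.
`(1 - M)(1 + X) = 1`. Positive definiteness of `1 + X` and Sylvester's determinant identity
`det (1 + Cᴴ N⁻¹ C) = det (1 + C Cᴴ N⁻¹)` finish the proof.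
-/

open Matrix ComplexOrder

namespace Matrix

variable {m n R : Type*} [Fintype m] [Fintype n] [DecidableEq m] [DecidableEq n] [CommRing R]

theorem inv_one_add_mul_inv_mul_eq_one_sub_mul_inv_add_mul_mul (N : Matrix n n R)
    (C : Matrix n m R) (D : Matrix m n R) (hN : IsUnit N.det) (hS : IsUnit (N + C * D).det) :
    (1 + D * N⁻¹ * C)⁻¹ = 1 - D * (N + C * D)⁻¹ * C := by
  set S := N + C * D
  have hN_inv : N⁻¹ = S⁻¹ + S⁻¹ * C * (D * N⁻¹) := by
    calc N⁻¹ = S⁻¹ * (S * N⁻¹) := by rw [← Matrix.mul_assoc, nonsing_inv_mul S hS, Matrix.one_mul]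
      _ = S⁻¹ + S⁻¹ * C * (D * N⁻¹) := by
        rw [Matrix.add_mul, mul_nonsing_inv N hN, Matrix.mul_add, Matrix.mul_one,
          Matrix.mul_assoc C, Matrix.mul_assoc]
  have hX : D * N⁻¹ * C = D * S⁻¹ * C + D * S⁻¹ * C * (D * N⁻¹ * C) := by
    conv_lhs => rw [hN_inv]
    simp only [Matrix.mul_add, Matrix.add_mul, Matrix.mul_assoc]
  refine inv_eq_left_inv ?_
  calc (1 - D * S⁻¹ * C) * (1 + D * N⁻¹ * C)
      = 1 + D * N⁻¹ * C - (D * S⁻¹ * C + D * S⁻¹ * C * (D * N⁻¹ * C)) := by noncomm_ring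
    _ = 1 := by rw [← hX, add_sub_cancel_right]

variable [StarRing R]

def errorCovariance (N : Matrix n n R) (C U : Matrix n m R) : Matrix m m R :=
  (1 - Uᴴ * C) * (1 - Uᴴ * C)ᴴ + Uᴴ * N * U

noncomputable def mmseReceiver (N : Matrix n n R) (C : Matrix n m R) : Matrix n m R :=
  (N + C * Cᴴ)⁻¹ * C

theorem errorCovariance_mmseReceiver (N : Matrix n n R) (C : Matrix n m R)
    (hS : (N + C * Cᴴ).IsHermitian) (hSdet : IsUnit (N + C * Cᴴ).det) :
    errorCovariance N C (mmseReceiver N C) = 1 - (mmseReceiver N C)ᴴ * C := by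
  set S := N + C * Cᴴ
  set U := mmseReceiver N C
  have hU : U = S⁻¹ * C := rfl
  have hUH : Uᴴ = Cᴴ * S⁻¹ := by
    rw [hU, conjTranspose_mul, conjTranspose_nonsing_inv, hS.eq]
  have hM : (Uᴴ * C)ᴴ = Uᴴ * C := by
    rw [hUH, conjTranspose_mul, conjTranspose_mul, conjTranspose_nonsing_inv, hS.eq,
      conjTranspose_conjTranspose, Matrix.mul_assoc]
  have hNoise : Uᴴ * N * U = Uᴴ * C - Uᴴ * C * (Uᴴ * C) := by
    have hN : N = S - C * Cᴴ := (add_sub_cancel_right N _).symm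
    have hSU : S * U = C := by
      rw [hU, ← Matrix.mul_assoc, mul_nonsing_inv S hSdet, Matrix.one_mul]
    have hCU : Cᴴ * U = Uᴴ * C := by rw [← hM, conjTranspose_mul, conjTranspose_conjTranspose]
    rw [hN, Matrix.mul_sub, Matrix.sub_mul, Matrix.mul_assoc _ S, hSU]
    simp only [Matrix.mul_assoc, hCU]
  rw [errorCovariance, conjTranspose_sub, conjTranspose_one, hM, hNoise]
  noncomm_ring

end Matrix

theorem mmse_error_covariance (n p m : ℕ)
    (A : Matrix (Fin n) (Fin p) ℂ) (B : Matrix (Fin p) (Fin m) ℂ)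
    (N : Matrix (Fin n) (Fin n) ℂ) (hN : N.PosDef)
    (Uopt : Matrix (Fin n) (Fin m) ℂ)
    (hUopt : Uopt = (N + A * B * Bᴴ * Aᴴ)⁻¹ * (A * B))
    (Eopt : Matrix (Fin m) (Fin m) ℂ)
    (hEopt : Eopt = ((1 : Matrix (Fin m) (Fin m) ℂ) - Uoptᴴ * (A * B)) *
        ((1 : Matrix (Fin m) (Fin m) ℂ) - Uoptᴴ * (A * B))ᴴ + Uoptᴴ * N * Uopt) :
    (1 : Matrix (Fin m) (Fin m) ℂ) - Uoptᴴ * (A * B) = Eopt ∧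
    Eopt = ((1 : Matrix (Fin m) (Fin m) ℂ) + Bᴴ * Aᴴ * N⁻¹ * (A * B))⁻¹ ∧
    Eopt.PosDef ∧
    Real.log (Eopt⁻¹).det.re =
      Real.log (((1 : Matrix (Fin n) (Fin n) ℂ) + A * B * Bᴴ * Aᴴ * N⁻¹).det.re) := by
  set C := A * B
  have hCH : Bᴴ * Aᴴ = Cᴴ := (conjTranspose_mul A B).symm
  have hS : (N + C * Cᴴ).PosDef := hN.add_posSemidef (posSemidef_self_mul_conjTranspose C)
  have hU : Uopt = mmseReceiver N C := by rw [hUopt, mmseReceiver, Matrix.mul_assoc C, hCH]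
  have hE : 1 - Uoptᴴ * C = Eopt := by
    rw [hEopt, hU]
    exact (errorCovariance_mmseReceiver N C hS.isHermitian hS.det_pos.ne'.isUnit).symm
  have hInfo : ((1 : Matrix (Fin m) (Fin m) ℂ) + Cᴴ * N⁻¹ * C).PosDef :=
    PosDef.one.add_posSemidef (hN.inv.posSemidef.conjTranspose_mul_mul_same C)
  have hE_eq : Eopt = (1 + Cᴴ * N⁻¹ * C)⁻¹ := by
    rw [inv_one_add_mul_inv_mul_eq_one_sub_mul_inv_add_mul_mul N C Cᴴ hN.det_pos.ne'.isUnit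
      hS.det_pos.ne'.isUnit, ← hE, hU, mmseReceiver, conjTranspose_mul, conjTranspose_nonsing_inv,
      hS.isHermitian.eq]
  refine ⟨hE, by rw [hCH, hE_eq], hE_eq ▸ hInfo.inv, ?_⟩
  rw [hE_eq, nonsing_inv_nonsing_inv _ hInfo.det_pos.ne'.isUnit, det_one_add_mul_comm (Cᴴ * N⁻¹) C,
    Matrix.mul_assoc C, hCH, Matrix.mul_assoc C]
end
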